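/- Existence of equilibrium prices in the Logit case (part of Theorem 3(iii)): assume n x > 0 for all x and m y > 0 for all y. Then the function W(p) = ∑_x n x · log(1 + ∑_z exp(α x z + p z)) + ∑_y m y · log(1 + ∑_z exp(γ z y − p z)) attains its infimum over p : Z → ℝ, i.e., there exists an equilibrium price vector p* with W(p*) ≤ W(p) for all p : Z → ℝ. -/

import Mathlib

open Finset MeasureTheory Real

variable {X Y Z : Type*} [Fintype X] [Fintype Y] [Fintype Z]
  [Nonempty X] [Nonempty Y] [Nonempty Z]

/-- A pair of supply/demand functions is a feasible flow. -/
def FeasibleFlow (n : X → ℝ) (m : Y → ℝ) (μs : X → Z → ℝ) (μd : Z → Y → ℝ) : Prop :=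
  (∀ x z, 0 ≤ μs x z) ∧ (∀ z y, 0 ≤ μd z y) ∧
    (∀ x, ∑ z, μs x z ≤ n x) ∧ (∀ y, ∑ z, μd z y ≤ m y) ∧
    (∀ z, ∑ x, μs x z = ∑ y, μd z y)

/-- The dual welfare function over prices in the Logit specification. -/
noncomputable def Wlogit (n : X → ℝ) (m : Y → ℝ) (α : X → Z → ℝ) (γ : Z → Y → ℝ)
    (p : Z → ℝ) : ℝ :=
  (∑ x, n x * Real.log (1 + ∑ z, Real.exp (α x z + p z))) +
    ∑ y, m y * Real.log (1 + ∑ z, Real.exp (γ z y - p z))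

/-- Generalized entropy of a flow in the Logit specification (note that in Lean
`0 * Real.log 0 = 0`, which implements the convention `0 · log 0 = 0`). -/
noncomputable def entropyE (n : X → ℝ) (m : Y → ℝ)
    (μs : X → Z → ℝ) (μd : Z → Y → ℝ) : ℝ :=
  (∑ x, ((∑ z, μs x z * Real.log (μs x z / n x)) +
      (n x - ∑ z, μs x z) * Real.log ((n x - ∑ z, μs x z) / n x))) +
    ∑ y, ((∑ z, μd z y * Real.log (μd z y / m y)) +
      (m y - ∑ z, μd z y) * Real.log ((m y - ∑ z, μd z y) / m y))

/-- The entropic social welfare of a flow in the Logit specification. -/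
noncomputable def entWelfare (n : X → ℝ) (m : Y → ℝ) (α : X → Z → ℝ) (γ : Z → Y → ℝ)
    (μs : X → Z → ℝ) (μd : Z → Y → ℝ) : ℝ :=
  (∑ x, ∑ z, μs x z * α x z) + (∑ z, ∑ y, μd z y * γ z y) - entropyE n m μs μd

/-! `W` is continuous, and it is coercive: if `|p z|` is large, then either `p z ≫ 0` and a
producer's option `z` alone gives `W p ≥ n x * (α x z + p z)`, or `p z ≪ 0` and a consumer's gives
`W p ≥ m y * (γ z y - p z)`. A continuous coercive function on `Z → ℝ` attains its minimum. -/

open Filter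

section LogOneAddSumExp

variable {ι : Type*} [Fintype ι]

lemma log_one_add_sum_exp_nonneg (v : ι → ℝ) : 0 ≤ log (1 + ∑ i, exp (v i)) :=
  log_nonneg <| le_add_of_nonneg_right <| by positivity

lemma le_log_one_add_sum_exp (v : ι → ℝ) (i : ι) : v i ≤ log (1 + ∑ j, exp (v j)) := by
  rw [le_log_iff_exp_le (by positivity)]
  exact (single_le_sum (fun j _ => (exp_pos (v j)).le) (mem_univ i)).trans
    (le_add_of_nonneg_left zero_le_one)

lemma continuous_log_one_add_sum_exp : Continuous fun v : ι → ℝ => log (1 + ∑ i, exp (v i)) :=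
  (continuous_const.add <| continuous_finsetSum _ fun i _ => (continuous_apply i).rexp).log
    fun v => (by positivity : (0 : ℝ) < 1 + ∑ i, exp (v i)).ne'

end LogOneAddSumExp

lemma tendsto_cocompact_atTop_of_norm_le {E : Type*} [SeminormedAddGroup E] [ProperSpace E]
    {f : E → ℝ} {a b : ℝ} (ha : 0 < a) (h : ∀ x, ‖x‖ ≤ a * f x + b) :
    Tendsto f (cocompact E) atTop := by
  refine tendsto_atTop_mono (fun x => ?_) <|
    (tendsto_atTop_add_const_right _ (-b) tendsto_norm_cocompact_atTop).const_mul_atTop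
      (inv_pos.2 ha)
  rw [inv_mul_le_iff₀ ha]
  linarith [h x]

section Wlogit

variable {X Y Z : Type*} [Fintype X] [Fintype Y] [Fintype Z]
  (n : X → ℝ) (m : Y → ℝ) (α : X → Z → ℝ) (γ : Z → Y → ℝ)

lemma continuous_Wlogit : Continuous (Wlogit n m α γ) :=
  (continuous_finsetSum _ fun _ _ => continuous_const.mul <|
      continuous_log_one_add_sum_exp.comp (continuous_const.add continuous_id)).add
    (continuous_finsetSum _ fun _ _ => continuous_const.mul <|
      continuous_log_one_add_sum_exp.comp (continuous_const.sub continuous_id))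

variable {n m} (hn : ∀ x, 0 ≤ n x) (hm : ∀ y, 0 ≤ m y)
include hn hm

lemma Wlogit_nonneg (p : Z → ℝ) : 0 ≤ Wlogit n m α γ p :=
  add_nonneg (sum_nonneg fun x _ => mul_nonneg (hn x) (log_one_add_sum_exp_nonneg _))
    (sum_nonneg fun y _ => mul_nonneg (hm y) (log_one_add_sum_exp_nonneg _))

lemma mul_add_le_Wlogit (p : Z → ℝ) (x : X) (z : Z) :
    n x * (α x z + p z) ≤ Wlogit n m α γ p :=
  calc n x * (α x z + p z) ≤ n x * log (1 + ∑ z, exp (α x z + p z)) :=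
        mul_le_mul_of_nonneg_left (le_log_one_add_sum_exp (fun z => α x z + p z) z) (hn x)
    _ ≤ ∑ x, n x * log (1 + ∑ z, exp (α x z + p z)) :=
        single_le_sum (fun x _ => mul_nonneg (hn x) (log_one_add_sum_exp_nonneg (α x + p)))
          (mem_univ x)
    _ ≤ Wlogit n m α γ p :=
        le_add_of_nonneg_right <|
          sum_nonneg fun y _ => mul_nonneg (hm y) (log_one_add_sum_exp_nonneg _)

lemma mul_sub_le_Wlogit (p : Z → ℝ) (z : Z) (y : Y) :
    m y * (γ z y - p z) ≤ Wlogit n m α γ p :=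
  calc m y * (γ z y - p z) ≤ m y * log (1 + ∑ z, exp (γ z y - p z)) :=
        mul_le_mul_of_nonneg_left (le_log_one_add_sum_exp (fun z => γ z y - p z) z) (hm y)
    _ ≤ ∑ y, m y * log (1 + ∑ z, exp (γ z y - p z)) :=
        single_le_sum
          (fun y _ => mul_nonneg (hm y) (log_one_add_sum_exp_nonneg fun z => γ z y - p z))
          (mem_univ y)
    _ ≤ Wlogit n m α γ p :=
        le_add_of_nonneg_left <|
          sum_nonneg fun x _ => mul_nonneg (hn x) (log_one_add_sum_exp_nonneg _)

lemma norm_le_Wlogit {x₀ : X} {y₀ : Y} (hx₀ : 0 < n x₀) (hy₀ : 0 < m y₀) (p : Z → ℝ) :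
    ‖p‖ ≤ ((n x₀)⁻¹ + (m y₀)⁻¹) * Wlogit n m α γ p + (‖α x₀‖ + ‖fun z => γ z y₀‖) := by
  have hW := Wlogit_nonneg α γ hn hm p
  refine (pi_norm_le_iff_of_nonneg (by positivity)).2 fun z => ?_
  have hα : |α x₀ z| ≤ ‖α x₀‖ := norm_le_pi_norm (α x₀) z
  have hγ : |γ z y₀| ≤ ‖fun z => γ z y₀‖ := norm_le_pi_norm (fun z => γ z y₀) z
  have hup : α x₀ z + p z ≤ (n x₀)⁻¹ * Wlogit n m α γ p :=
    (le_inv_mul_iff₀ hx₀).2 (mul_add_le_Wlogit α γ hn hm p x₀ z)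
  have hlow : γ z y₀ - p z ≤ (m y₀)⁻¹ * Wlogit n m α γ p :=
    (le_inv_mul_iff₀ hy₀).2 (mul_sub_le_Wlogit α γ hn hm p z y₀)
  have : 0 ≤ (n x₀)⁻¹ * Wlogit n m α γ p := by positivity
  have : 0 ≤ (m y₀)⁻¹ * Wlogit n m α γ p := by positivity
  rw [Real.norm_eq_abs, abs_le]
  constructor <;> linarith [abs_le.1 hα, abs_le.1 hγ]

end Wlogit

/-- Part of Theorem 3(iii): existence of equilibrium prices in the Logit case. -/
theorem logit_equilibrium_prices_exist (n : X → ℝ) (m : Y → ℝ)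
    (hn : ∀ x, 0 < n x) (hm : ∀ y, 0 < m y) (α : X → Z → ℝ) (γ : Z → Y → ℝ) :
    ∃ p₀ : Z → ℝ, ∀ p : Z → ℝ, Wlogit n m α γ p₀ ≤ Wlogit n m α γ p := by
  obtain ⟨x₀⟩ := ‹Nonempty X›
  obtain ⟨y₀⟩ := ‹Nonempty Y›
  have hbound := norm_le_Wlogit α γ (fun x => (hn x).le) (fun y => (hm y).le) (hn x₀) (hm y₀)
  exact (continuous_Wlogit n m α γ).exists_forall_le
    (tendsto_cocompact_atTop_of_norm_le (add_pos (inv_pos.2 (hn x₀)) (inv_pos.2 (hm y₀))) hbound)
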